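/- For an integer ℓ ≥ 2 let g_ℓ(u) := √3·u^ℓ / √((u+2)(6−5u)³) (defined for real u near 1) and set ξ_ℓ := (1/(12^ℓ·(ℓ−1)!)) · g_ℓ^{(ℓ−1)}(1), where g_ℓ^{(ℓ−1)} denotes the (ℓ−1)-st derivative. Then ξ_ℓ is a rational number and ξ_ℓ ≥ 12^{−ℓ}; in particular ξ_ℓ > 0. -/

import Mathlib

open Real Nat

/-- The function `g_ℓ(u) = √3·u^ℓ/√((u+2)(6−5u)³)`. -/
noncomputable def g (ℓ : ℕ) (u : ℝ) : ℝ :=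
  Real.sqrt 3 * u ^ ℓ / Real.sqrt ((u + 2) * (6 - 5 * u) ^ 3)

/-- `ξ_ℓ`, the limiting probability that the root face of a random rooted planar map
is a pure `ℓ`-gon. -/
noncomputable def xi (ℓ : ℕ) : ℝ :=
  1 / ((12 : ℝ) ^ ℓ * ((ℓ - 1)! : ℝ)) * iteratedDeriv (ℓ - 1) (g ℓ) 1

/-!
Near `u = 1` we have `g ℓ u = u ^ ℓ * g 0 u` with `g 0 u = √3 (u + 2)^(-1/2) (6 - 5u)^(-3/2)`, so
Leibniz's rule writes `g_ℓ^(ℓ-1)(1)` as a combination, with nonnegative integer coefficients, of the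
derivatives `(g 0)^(j)(1)`. Leibniz's rule again, with the derivatives of negative powers of affine
functions, gives `(g 0)^(j)(1) = ∑ᵢ (-1)^i tᵢ` where
`tᵢ = C(j,i) (1/2)ᵢ 3^(-i) (3/2)ⱼ₋ᵢ 5^(j-i)` is rational (`(a)ₖ` the rising factorial). The ratio
`tᵢ₊₁ / tᵢ = (j-i)(i+1/2) / (15 (i+1)(j-i+1/2))` is below `1`, so these alternating sums are
nonnegative. Keeping only the term `ℓ.descFactorial (ℓ-1) * (g 0)(1) ≥ (ℓ-1)!` of the outer sum
gives `ξ_ℓ ≥ 12^(-ℓ)`.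
-/

open Filter Topology Finset Polynomial

theorem iteratedDeriv_rpow_neg_affine {a b s x : ℝ} (hx : 0 < a * x + b) (k : ℕ) :
    iteratedDeriv k (fun y => (a * y + b) ^ (-s)) x =
      (ascPochhammer ℝ k).eval s * (-a) ^ k * (a * x + b) ^ (-s - k) := by
  induction k generalizing x with
  | zero => simp
  | succ k ih =>
    have hopen : IsOpen {y : ℝ | 0 < a * y + b} := isOpen_lt continuous_const (by fun_prop)
    have hev : iteratedDeriv k (fun y => (a * y + b) ^ (-s)) =ᶠ[𝓝 x]
        fun y => (ascPochhammer ℝ k).eval s * (-a) ^ k * (a * y + b) ^ (-s - k) :=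
      eventually_of_mem (hopen.mem_nhds hx) fun y hy => ih hy
    have hderiv : HasDerivAt (fun y => (a * y + b) ^ (-s - k))
        (a * (-s - k) * (a * x + b) ^ (-s - k - 1)) x := by
      simpa using (((hasDerivAt_id x).const_mul a).add_const b).rpow_const (Or.inl hx.ne')
    rw [iteratedDeriv_succ, hev.deriv_eq, (hderiv.const_mul _).deriv, ascPochhammer_succ_eval,
      Nat.cast_succ, ← sub_sub]
    ring

theorem contDiffAt_rpow_affine {a b r x : ℝ} (hx : 0 < a * x + b) (n : ℕ) :
    ContDiffAt ℝ n (fun y => (a * y + b) ^ r) x :=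
  ContDiffAt.rpow_const_of_ne (by fun_prop) hx.ne'

theorem sum_range_neg_one_pow_mul_nonneg {R : Type*} [Ring R] [PartialOrder R] [IsOrderedRing R]
    {u : ℕ → R} (hu : Antitone u) (hu0 : ∀ i, 0 ≤ u i) (n : ℕ) :
    0 ≤ ∑ i ∈ range n, (-1) ^ i * u i ∧ ∑ i ∈ range n, (-1) ^ i * u i ≤ u 0 := by
  induction n generalizing u with
  | zero => simpa using hu0 0
  | succ n ih =>
    obtain ⟨h0, h1⟩ := ih (u := fun i => u (i + 1)) (fun i j hij => hu (by omega)) (fun _ => hu0 _)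
    have hshift : ∑ i ∈ range (n + 1), (-1) ^ i * u i =
        u 0 - ∑ i ∈ range n, (-1) ^ i * u (i + 1) := by
      simp [sum_range_succ', pow_succ, sub_eq_neg_add]
    rw [hshift]
    exact ⟨sub_nonneg.mpr (h1.trans (hu (Nat.zero_le 1))), sub_le_self _ h0⟩

theorem Rat.cast_ascPochhammer_eval (n : ℕ) (q : ℚ) :
    (((ascPochhammer ℚ n).eval q : ℚ) : ℝ) = (ascPochhammer ℝ n).eval (q : ℝ) := by
  rw [ascPochhammer_eval₂ (Rat.castHom ℝ), ← Rat.coe_castHom, eval₂_at_apply]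

theorem g_eq_pow_mul_g_zero (ℓ : ℕ) : g ℓ = fun u => u ^ ℓ * g 0 u := by
  funext u
  simp only [g, pow_zero, mul_one]
  ring

/-- The affine factors are written as `a * u + b` to match `iteratedDeriv_rpow_neg_affine`. -/
theorem g_zero_eventuallyEq :
    g 0 =ᶠ[𝓝 1] fun u => √3 * ((1 * u + 2) ^ (-(1 / 2) : ℝ) * (-5 * u + 6) ^ (-(3 / 2) : ℝ)) := by
  refine eventually_of_mem (isOpen_Ioo.mem_nhds (by norm_num : (1 : ℝ) ∈ Set.Ioo (-2) (6 / 5)))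
    fun u hu => ?_
  have hu₁ : 0 < u + 2 := by linarith [hu.1]
  have hu₂ : 0 < 6 - 5 * u := by linarith [hu.2]
  have hsqrt :
      √((u + 2) * (6 - 5 * u) ^ 3) = (u + 2) ^ (1 / 2 : ℝ) * (6 - 5 * u) ^ (3 / 2 : ℝ) := by
    rw [Real.sqrt_eq_rpow, Real.mul_rpow hu₁.le (by positivity), ← Real.rpow_natCast,
      ← Real.rpow_mul hu₂.le]
    norm_num
  show √3 * u ^ 0 / _ = √3 * ((1 * u + 2) ^ (-(1 / 2) : ℝ) * (-5 * u + 6) ^ (-(3 / 2) : ℝ))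
  rw [one_mul, show -5 * u + 6 = 6 - 5 * u by ring, Real.rpow_neg hu₁.le, Real.rpow_neg hu₂.le,
    hsqrt]
  field_simp

noncomputable def gZeroDerivTerm (j i : ℕ) : ℚ :=
  j.choose i * ((ascPochhammer ℚ i).eval (1 / 2) / 3 ^ i) *
    ((ascPochhammer ℚ (j - i)).eval (3 / 2) * 5 ^ (j - i))

noncomputable def gZeroDeriv (j : ℕ) : ℚ := ∑ i ∈ range (j + 1), (-1) ^ i * gZeroDerivTerm j i

theorem sqrt_three_mul_three_rpow (i : ℕ) :
    √3 * (3 : ℝ) ^ (-(1 / 2) - (i : ℝ)) = ((3 : ℝ) ^ i)⁻¹ := by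
  rw [Real.sqrt_eq_rpow, ← Real.rpow_add (by norm_num),
    show 1 / 2 + (-(1 / 2) - (i : ℝ)) = -i by ring, Real.rpow_neg (by norm_num), Real.rpow_natCast]

theorem iteratedDeriv_g_zero_one (j : ℕ) : iteratedDeriv j (g 0) 1 = gZeroDeriv j := by
  rw [g_zero_eventuallyEq.iteratedDeriv_eq, iteratedDeriv_const_mul_field,
    iteratedDeriv_fun_mul (contDiffAt_rpow_affine (by norm_num) _)
      (contDiffAt_rpow_affine (by norm_num) _), gZeroDeriv, Rat.cast_sum, mul_sum]
  refine sum_congr rfl fun i _ => ?_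
  rw [iteratedDeriv_rpow_neg_affine (by norm_num), iteratedDeriv_rpow_neg_affine (by norm_num)]
  norm_num only [gZeroDerivTerm, Rat.cast_mul, Rat.cast_pow, Rat.cast_div, Rat.cast_natCast,
    Rat.cast_ascPochhammer_eval, Real.one_rpow]
  rw [div_eq_mul_inv _ ((3 : ℝ) ^ i), ← sqrt_three_mul_three_rpow]
  ring

theorem gZeroDerivTerm_nonneg (j i : ℕ) : 0 ≤ gZeroDerivTerm j i := by
  have := ascPochhammer_pos i (1 / 2 : ℚ) (by norm_num)
  have := ascPochhammer_pos (j - i) (3 / 2 : ℚ) (by norm_num)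
  unfold gZeroDerivTerm
  positivity

theorem gZeroDerivTerm_succ_le (j i : ℕ) : gZeroDerivTerm j (i + 1) ≤ gZeroDerivTerm j i := by
  rcases le_or_gt j i with h | h
  · rw [gZeroDerivTerm, Nat.choose_eq_zero_of_lt (by omega)]
    simpa using gZeroDerivTerm_nonneg j i
  obtain ⟨m, rfl⟩ : ∃ m, j = i + 1 + m := ⟨j - (i + 1), by omega⟩
  have hchoose : ((i + 1 + m).choose (i + 1) : ℚ) * (i + 1) = (i + 1 + m).choose i * (m + 1) := by
    have := Nat.choose_succ_right_eq (i + 1 + m) i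
    rw [show i + 1 + m - i = m + 1 by omega] at this
    exact_mod_cast this
  rw [← mul_le_mul_iff_of_pos_left (by positivity : (0 : ℚ) < i + 1)]
  simp only [gZeroDerivTerm, show i + 1 + m - (i + 1) = m by omega,
    show i + 1 + m - i = m + 1 by omega, ascPochhammer_succ_eval, pow_succ]
  set A := (ascPochhammer ℚ i).eval (1 / 2)
  set B := (ascPochhammer ℚ m).eval (3 / 2)
  have hR : 0 ≤ ((i + 1 + m).choose i : ℚ) * A * B * 5 ^ m / 3 ^ i := by
    have := ascPochhammer_pos i (1 / 2 : ℚ) (by norm_num)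
    have := ascPochhammer_pos m (3 / 2 : ℚ) (by norm_num)
    positivity
  calc _ = ((i + 1 + m).choose i * A * B * 5 ^ m / 3 ^ i) * ((m + 1) * (1 / 2 + i) / 3) := by
        linear_combination (A * (1 / 2 + i) / (3 ^ i * 3) * B * 5 ^ m) * hchoose
    _ ≤ ((i + 1 + m).choose i * A * B * 5 ^ m / 3 ^ i) * ((i + 1) * (3 / 2 + m) * 5) := by
        gcongr
        nlinarith
    _ = _ := by ring

theorem gZeroDeriv_nonneg (j : ℕ) : 0 ≤ gZeroDeriv j :=
  (sum_range_neg_one_pow_mul_nonneg (antitone_nat_of_succ_le (gZeroDerivTerm_succ_le j))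
    (gZeroDerivTerm_nonneg j) (j + 1)).1

theorem gZeroDeriv_zero : gZeroDeriv 0 = 1 := by
  simp [gZeroDeriv, gZeroDerivTerm]

theorem contDiffAt_g_zero_one (n : ℕ) : ContDiffAt ℝ n (g 0) 1 :=
  (contDiffAt_const.mul ((contDiffAt_rpow_affine (by norm_num) n).mul
    (contDiffAt_rpow_affine (by norm_num) n))).congr_of_eventuallyEq g_zero_eventuallyEq

theorem iteratedDeriv_g_one (ℓ n : ℕ) :
    iteratedDeriv n (g ℓ) 1 =
      ∑ i ∈ range (n + 1), (n.choose i : ℝ) * ℓ.descFactorial i * gZeroDeriv (n - i) := by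
  rw [g_eq_pow_mul_g_zero, iteratedDeriv_fun_mul (by fun_prop) (contDiffAt_g_zero_one n)]
  simp only [iteratedDeriv_pow, iteratedDeriv_g_zero_one, one_pow, mul_one]

noncomputable def xiRat (ℓ : ℕ) : ℚ :=
  1 / (12 ^ ℓ * (ℓ - 1)!) *
    ∑ i ∈ range (ℓ - 1 + 1), ((ℓ - 1).choose i : ℚ) * ℓ.descFactorial i * gZeroDeriv (ℓ - 1 - i)

theorem xi_eq_xiRat (ℓ : ℕ) : xi ℓ = xiRat ℓ := by
  rw [xi, iteratedDeriv_g_one, xiRat]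
  push_cast
  rfl

theorem inv_twelve_pow_le_xiRat (ℓ : ℕ) : (12 : ℚ)⁻¹ ^ ℓ ≤ xiRat ℓ := by
  have hlast : ((ℓ - 1)! : ℚ) ≤ ∑ i ∈ range (ℓ - 1 + 1),
      ((ℓ - 1).choose i : ℚ) * ℓ.descFactorial i * gZeroDeriv (ℓ - 1 - i) := by
    refine le_trans ?_ (single_le_sum
      (fun i _ => by have := gZeroDeriv_nonneg (ℓ - 1 - i); positivity)
      (self_mem_range_succ (ℓ - 1)))
    rw [Nat.choose_self, Nat.sub_self, gZeroDeriv_zero, Nat.cast_one, one_mul, mul_one,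
      ← Nat.descFactorial_self]
    exact_mod_cast Nat.descFactorial_le (ℓ - 1) (Nat.sub_le ℓ 1)
  calc (12 : ℚ)⁻¹ ^ ℓ = 1 / (12 ^ ℓ * (ℓ - 1)!) * (ℓ - 1)! := by rw [inv_pow]; field_simp
    _ ≤ xiRat ℓ := by rw [xiRat]; gcongr

theorem xi_rational_and_positive_general (ℓ : ℕ) :
    (∃ q : ℚ, xi ℓ = (q : ℝ)) ∧ (12 : ℝ)⁻¹ ^ ℓ ≤ xi ℓ ∧ 0 < xi ℓ := by
  have hbound : (12 : ℝ)⁻¹ ^ ℓ ≤ xi ℓ := by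
    rw [xi_eq_xiRat]
    have h : (((12 : ℚ)⁻¹ ^ ℓ : ℚ) : ℝ) ≤ xiRat ℓ := Rat.cast_le.mpr (inv_twelve_pow_le_xiRat ℓ)
    rwa [Rat.cast_pow, Rat.cast_inv, Rat.cast_ofNat] at h
  exact ⟨⟨xiRat ℓ, xi_eq_xiRat ℓ⟩, hbound, (by positivity : (0 : ℝ) < 12⁻¹ ^ ℓ).trans_le hbound⟩

/-- `ξ_ℓ` is rational and at least `12⁻ℓ`; in particular it is positive. -/
theorem xi_rational_and_positive (ℓ : ℕ) (hℓ : 2 ≤ ℓ) :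
    (∃ q : ℚ, xi ℓ = (q : ℝ)) ∧ (12 : ℝ)⁻¹ ^ ℓ ≤ xi ℓ ∧ 0 < xi ℓ :=
  xi_rational_and_positive_general ℓ
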